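/- arXiv:math/0608604 — 5 statements merged into one kernel-verified Lean document; each statement's English description precedes it below -/
import Mathlib

section
/- Let k be a field of characteristic 2, let D₀ be a k-derivation on k(X) with D₀(X) = 1, let g ∈ k(X), and let D be a k-derivation on k(X) with D(X) = g. Then for every f ∈ k(X) one has D(D(f)) = g · D₀(g) · D₀(f); that is, D ∘ D equals the k-derivation (g · D₀(g)) • D₀. In particular, D ∘ D = 0 if and only if g · D₀(g) = 0. -/
open Polynomial

private lemma ratFunc_algebraMap_eq_aeval {k : Type*} [Field k] (p : k[X]) :
    algebraMap k[X] (RatFunc k) p = aeval RatFunc.X p := by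
  have : (IsScalarTower.toAlgHom k k[X] (RatFunc k)) = aeval RatFunc.X := by
    apply Polynomial.algHom_ext
    simp [RatFunc.algebraMap_X]
  exact congrFun (congrArg DFunLike.coe this) p

/-- A `k`-derivation on `RatFunc k` is determined by its value at `X`. -/
private lemma ratFunc_derivation_ext {k : Type*} [Field k]
    (D1 D2 : Derivation k (RatFunc k) (RatFunc k)) (h : D1 RatFunc.X = D2 RatFunc.X) :
    D1 = D2 := by
  have hpoly : ∀ p : k[X], D1 (algebraMap k[X] (RatFunc k) p) =
      D2 (algebraMap k[X] (RatFunc k) p) := by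
    intro p
    rw [ratFunc_algebraMap_eq_aeval, Derivation.map_aeval, Derivation.map_aeval, h]
  ext f
  induction f using RatFunc.induction_on with
  | f p q hq =>
    rw [Derivation.leibniz_div, Derivation.leibniz_div, hpoly, hpoly]

private lemma ratFunc_D_sq_zero {k : Type*} [Field k] [CharP k 2]
    (D₀ : Derivation k (RatFunc k) (RatFunc k)) (hD₀ : D₀ RatFunc.X = 1)
    (f : RatFunc k) : D₀ (D₀ f) = 0 := by
  have hchar : CharP (RatFunc k) 2 :=
    charP_of_injective_algebraMap (algebraMap k (RatFunc k)).injective 2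
  have h2 : (2 : RatFunc k) = 0 := by
    simpa using hchar.cast_eq_zero
  let E : Derivation k (RatFunc k) (RatFunc k) :=
    { toFun := fun x => D₀ (D₀ x)
      map_add' := by intros; simp
      map_smul' := by intros; simp
      map_one_eq_zero' := by simp
      leibniz' := by
        intro a b
        show D₀ (D₀ (a * b)) = a * D₀ (D₀ b) + b * D₀ (D₀ a)
        simp only [Derivation.leibniz, map_add, smul_eq_mul, map_mul, smul_add]
        linear_combination (D₀ a * D₀ b) * h2 }
  have hE : E = 0 := by
    have := ratFunc_derivation_ext E 0 (by simp [E, hD₀])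
    exact this
  have : E f = 0 := by rw [hE]; rfl
  simpa [E] using this

/-- In characteristic 2, if `D₀` is the `k`-derivation on `k(X)` with `D₀ X = 1` and `D` is the
`k`-derivation with `D X = g`, then `D (D f) = g · D₀ g · D₀ f` for every `f ∈ k(X)`;
in particular `D ∘ D = 0` if and only if `g · D₀ g = 0`. -/
theorem ratFunc_derivation_squared (k : Type*) [Field k] [CharP k 2]
    (D₀ : Derivation k (RatFunc k) (RatFunc k)) (hD₀ : D₀ RatFunc.X = 1)
    (g : RatFunc k) (D : Derivation k (RatFunc k) (RatFunc k)) (hD : D RatFunc.X = g) :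
    (∀ f : RatFunc k, D (D f) = g * D₀ g * D₀ f) ∧
      ((∀ f : RatFunc k, D (D f) = 0) ↔ g * D₀ g = 0) := by
  have hDeq : D = g • D₀ := by
    apply ratFunc_derivation_ext
    simp [hD, hD₀]
  have key : ∀ f : RatFunc k, D (D f) = g * D₀ g * D₀ f := by
    intro f
    rw [hDeq]
    simp only [Derivation.smul_apply, smul_eq_mul, Derivation.leibniz, smul_eq_mul]
    rw [ratFunc_D_sq_zero D₀ hD₀ f]
    ring
  refine ⟨key, ?_, fun h f => by rw [key, h, zero_mul]⟩
  intro h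
  have := h RatFunc.X
  rw [key, hD₀, mul_one] at this
  exact this
end

section
/- Let k be a field of characteristic 2, let h ∈ k(X), and let D be a k-derivation on k(X) with D(X) = h². Then D is additive, i.e. D ∘ D = 0. -/
/-- In characteristic 2, a `k`-derivation `D` on `k(X)` with `D X` a square is additive,
i.e. `D ∘ D = 0`. -/
theorem ratFunc_derivation_square_additive (k : Type*) [Field k] [CharP k 2]
    (h : RatFunc k) (D : Derivation k (RatFunc k) (RatFunc k)) (hD : D RatFunc.X = h ^ 2) :
    ∀ f : RatFunc k, D (D f) = 0 := by
  haveI : CharP (RatFunc k) 2 :=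
    charP_of_injective_algebraMap (algebraMap k (RatFunc k)).injective 2
  have char2 : ∀ x : RatFunc k, x + x = 0 := fun x => CharTwo.add_self_eq_zero x
  -- D ∘ D is a derivation in characteristic 2
  set D2 : Derivation k (RatFunc k) (RatFunc k) :=
    { toLinearMap := D.toLinearMap.comp D.toLinearMap
      map_one_eq_zero' := by simp
      leibniz' := by
        intro a b
        simp only [LinearMap.comp_apply, Derivation.coeFn_coe]
        rw [D.leibniz, map_add]
        simp only [smul_eq_mul]
        rw [D.leibniz, D.leibniz]
        simp only [smul_eq_mul]
        have : D a * D b + D b * D a = 0 := by rw [mul_comm]; exact char2 _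
        linear_combination this } with hD2
  have hD2app : ∀ f : RatFunc k, D2 f = D (D f) := fun f => rfl
  have hX : D2 RatFunc.X = 0 := by
    rw [hD2app, hD, pow_two, D.leibniz]
    simp only [smul_eq_mul]
    exact char2 _
  -- D2 vanishes on polynomials
  have hpoly : ∀ p : Polynomial k, D2 (algebraMap (Polynomial k) (RatFunc k) p) = 0 := by
    have : D2.compAlgebraMap (Polynomial k) = 0 := by
      apply Polynomial.derivation_ext
      simpa [Derivation.compAlgebraMap, RatFunc.algebraMap_X] using hX
    intro p
    have := congrFun (congrArg (fun (E : Derivation k (Polynomial k) (RatFunc k)) => (E : Polynomial k → RatFunc k)) this) p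
    simpa [Derivation.compAlgebraMap] using this
  intro f
  rw [← hD2app]
  conv_lhs => rw [← RatFunc.num_div_denom f]
  rw [Derivation.leibniz_div, hpoly, hpoly, smul_zero, smul_zero, sub_zero, smul_zero]
end

section
/- Let k be a field of characteristic 2 and let α, a, b ∈ k. Let R be the quotient of the polynomial ring k[x, y] by the ideal generated by y² + αxy + y + x³ (the Deuring normal form relation y² + αxy + y = x³, since char k = 2), and write x̄, ȳ for the images of x, y in R. Then there exists a k-derivation δ : R → R with δ(x̄) = (a + b·x̄)(1 + α·x̄) and δ(ȳ) = (a + b·x̄)(α·ȳ + x̄²). (In other words, the rational vector field δ_{α,a,b} of the projective plane restricts to a regular vector field on the affine Deuring curve.) -/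
open MvPolynomial

/-- The Deuring normal form relation `y² + αxy + y + x³` in the polynomial ring `k[x, y]`
(in characteristic 2 this is the relation `y² + αxy + y = x³`). -/
noncomputable def deuringRel (k : Type*) [CommRing k] (α : k) : MvPolynomial (Fin 2) k :=
  (X 1) ^ 2 + C α * X 0 * X 1 + X 1 + (X 0) ^ 3

/-- The affine coordinate ring `k[x, y]/(y² + αxy + y + x³)` of the Deuring curve. -/
abbrev DeuringRing (k : Type*) [CommRing k] (α : k) : Type _ :=
  MvPolynomial (Fin 2) k ⧸ Ideal.span {deuringRel k α}

set_option maxHeartbeats 1000000 in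
/-- On the affine curve `y² + αxy + y = x³` in Deuring normal form over a field of
characteristic 2, there exists a `k`-derivation `δ` of its coordinate ring `R` with
`δ(x̄) = (a + b·x̄)(1 + α·x̄)` and `δ(ȳ) = (a + b·x̄)(α·ȳ + x̄²)`
(the rational vector field `δ_{α,a,b}` of the projective plane restricts to the curve). -/
theorem deuring_vector_field_exists (k : Type*) [Field k] [CharP k 2] (α a b : k) :
    ∃ δ : Derivation k (DeuringRing k α) (DeuringRing k α),
      δ (Ideal.Quotient.mk _ (X 0)) =
        (algebraMap k _ a + algebraMap k _ b * Ideal.Quotient.mk _ (X 0)) *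
          (1 + algebraMap k _ α * Ideal.Quotient.mk _ (X 0)) ∧
      δ (Ideal.Quotient.mk _ (X 1)) =
        (algebraMap k _ a + algebraMap k _ b * Ideal.Quotient.mk _ (X 0)) *
          (algebraMap k _ α * Ideal.Quotient.mk _ (X 1) +
            (Ideal.Quotient.mk _ (X 0)) ^ 2) := by
  set P := MvPolynomial (Fin 2) k with hP
  set I : Ideal P := Ideal.span {deuringRel k α} with hI
  set R := DeuringRing k α with hR
  set fx : R := (algebraMap k R a + algebraMap k R b * Ideal.Quotient.mk I (X 0)) *
          (1 + algebraMap k R α * Ideal.Quotient.mk I (X 0)) with hfx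
  set fy : R := (algebraMap k R a + algebraMap k R b * Ideal.Quotient.mk I (X 0)) *
          (algebraMap k R α * Ideal.Quotient.mk I (X 1) + (Ideal.Quotient.mk I (X 0)) ^ 2)
    with hfy
  set D : Derivation k P R := mkDerivation k ![fx, fy] with hD
  have hsm : ∀ (p : P) (r : R), p • r = Ideal.Quotient.mk I p * r := fun p r => by
    obtain ⟨q, rfl⟩ := Ideal.Quotient.mk_surjective r
    rw [← map_mul]; rfl
  have h2 : (2 : R) = 0 := by
    have hk : (2 : k) = 0 := by exact_mod_cast CharP.cast_eq_zero k 2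
    calc (2 : R) = algebraMap k R 2 := (map_ofNat _ 2).symm
    _ = 0 := by rw [hk, map_zero]
  have hx : D (X 0) = fx := mkDerivation_X k ![fx, fy] 0
  have hy : D (X 1) = fy := mkDerivation_X k ![fx, fy] 1
  have hDrel : D (deuringRel k α) = 0 := by
    have hC : D (C α) = 0 := by
      rw [show (C α : P) = algebraMap k P α from rfl, Derivation.map_algebraMap]
    simp only [deuringRel, Derivation.leibniz, Derivation.leibniz_pow, map_add, hsm,
      hx, hy, hC, map_mul, map_pow, mul_zero, add_zero, zero_add]
    have h3 : ((3 : ℕ) : R) = 1 := by push_cast; rw [show (3:R) = 2 + 1 by norm_num, h2]; ring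
    have h2' : ((2 : ℕ) : R) = 0 := by push_cast; exact h2
    have hCa : (Ideal.Quotient.mk I) (C α) = algebraMap k R α := rfl
    rw [nsmul_eq_mul, nsmul_eq_mul, h2', h3, hCa, hfx, hfy]
    set u := Ideal.Quotient.mk I (X 0)
    set v := Ideal.Quotient.mk I (X 1)
    linear_combination ((algebraMap k R a + algebraMap k R b * u) *
      ((algebraMap k R α)^2 * u * v + algebraMap k R α * u^3 + algebraMap k R α * v + u^2)) * h2
  -- the linear map kills I
  have hker : I.restrictScalars k ≤ LinearMap.ker (D : P →ₗ[k] R) := by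
    intro p hp
    rw [Submodule.restrictScalars_mem] at hp
    obtain ⟨q, rfl⟩ := Ideal.mem_span_singleton'.mp hp
    simp only [LinearMap.mem_ker, Derivation.coeFn_coe, Derivation.leibniz, hDrel, smul_zero,
      zero_add, hsm]
    have h0 : Ideal.Quotient.mk I (deuringRel k α) = 0 :=
      Ideal.Quotient.eq_zero_iff_mem.mpr (Ideal.subset_span rfl)
    rw [h0, zero_mul, mul_zero, zero_add]
  let lin : R →ₗ[k] R :=
    ((I.restrictScalars k).liftQ (D : P →ₗ[k] R) hker) ∘ₗ
      ((Submodule.Quotient.restrictScalarsEquiv k I).symm : R →ₗ[k] _)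
  have hlin : ∀ p : P, lin (Ideal.Quotient.mk I p) = D p := fun p => by
    show ((I.restrictScalars k).liftQ (D : P →ₗ[k] R) hker)
        ((Submodule.Quotient.restrictScalarsEquiv k I).symm (Submodule.Quotient.mk p)) = D p
    rw [Submodule.Quotient.restrictScalarsEquiv_symm_mk, Submodule.liftQ_apply,
      Derivation.coeFn_coe]
  have hmul : ∀ r s : R, lin (r * s) = r * lin s + s * lin r := fun r s => by
    obtain ⟨p, rfl⟩ := Ideal.Quotient.mk_surjective r
    obtain ⟨q, rfl⟩ := Ideal.Quotient.mk_surjective s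
    rw [← map_mul, hlin, hlin, hlin, Derivation.leibniz, hsm, hsm]
  refine ⟨Derivation.mk' lin (fun r s => by rw [hmul, smul_eq_mul, smul_eq_mul]),
    ?_, ?_⟩
  · show lin (Ideal.Quotient.mk I (X 0)) = fx
    rw [hlin, hx]
  · show lin (Ideal.Quotient.mk I (X 1)) = fy
    rw [hlin, hy]
end

section
/- Let k be a field of characteristic 2 and let α, a, b ∈ k. Let R = k[x, y]/(y² + αxy + y + x³) with x̄, ȳ the images of x, y. Then every k-derivation δ : R → R with δ(x̄) = (a + b·x̄)(1 + α·x̄) and δ(ȳ) = (a + b·x̄)(α·ȳ + x̄²) satisfies δ ∘ δ = (aα + b) • δ, i.e. δ(δ(r)) = (aα + b)·δ(r) for all r ∈ R. In particular, δ is additive (δ ∘ δ = 0) if aα + b = 0 and multiplicative (δ ∘ δ = δ) if aα + b = 1. -/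
open MvPolynomial

set_option maxHeartbeats 1000000 in
/-- Every `k`-derivation `δ` of the coordinate ring of the Deuring curve `y² + αxy + y = x³`
in characteristic 2 with `δ(x̄) = (a + b·x̄)(1 + α·x̄)` and `δ(ȳ) = (a + b·x̄)(α·ȳ + x̄²)`
satisfies `δ ∘ δ = (aα + b) • δ`; in particular `δ` is additive if `aα + b = 0` and
multiplicative if `aα + b = 1`. -/
theorem deuring_vector_field_pClosed (k : Type*) [Field k] [CharP k 2] (α a b : k)
    (δ : Derivation k (DeuringRing k α) (DeuringRing k α))
    (hx : δ (Ideal.Quotient.mk _ (X 0)) =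
      (algebraMap k _ a + algebraMap k _ b * Ideal.Quotient.mk _ (X 0)) *
        (1 + algebraMap k _ α * Ideal.Quotient.mk _ (X 0)))
    (hy : δ (Ideal.Quotient.mk _ (X 1)) =
      (algebraMap k _ a + algebraMap k _ b * Ideal.Quotient.mk _ (X 0)) *
        (algebraMap k _ α * Ideal.Quotient.mk _ (X 1) +
          (Ideal.Quotient.mk _ (X 0)) ^ 2)) :
    (∀ r : DeuringRing k α, δ (δ r) = (a * α + b) • δ r) ∧
      (a * α + b = 0 → ∀ r : DeuringRing k α, δ (δ r) = 0) ∧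
      (a * α + b = 1 → ∀ r : DeuringRing k α, δ (δ r) = δ r) := by
  set A := algebraMap k (DeuringRing k α) with hA
  set xb := Ideal.Quotient.mk (Ideal.span {deuringRel k α}) (X 0) with hxb
  set yb := Ideal.Quotient.mk (Ideal.span {deuringRel k α}) (X 1) with hyb
  have two : (2 : DeuringRing k α) = 0 := by
    rw [show (2 : DeuringRing k α) = A (2 : k) from (map_ofNat _ 2).symm,
      show (2 : k) = 0 from CharTwo.two_eq_zero, map_zero]
  have hAz : ∀ s : k, δ (A s) = 0 := fun s => δ.map_algebraMap s
  have hsmul : ∀ (c : k) (r : DeuringRing k α), c • r = A c * r :=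
    fun c r => Algebra.smul_def c r
  have hX : δ (δ xb) = (a * α + b) • δ xb := by
    rw [hx, hsmul]
    simp only [Derivation.leibniz, map_add, map_mul, hAz, Derivation.map_one_eq_zero,
      smul_eq_mul, mul_zero, zero_mul, add_zero, zero_add, hx]
    linear_combination (A α * A b * xb * ((A a + A b * xb) * (1 + A α * xb))) * two
  have hY : δ (δ yb) = (a * α + b) • δ yb := by
    rw [hy, hsmul]
    simp only [Derivation.leibniz, Derivation.leibniz_pow, map_add, map_mul, hAz,
      Derivation.map_one_eq_zero, smul_eq_mul, mul_zero, zero_mul, add_zero, zero_add,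
      nsmul_eq_mul, Nat.cast_ofNat, hx, hy]
    linear_combination (A α * A b * xb * ((A a + A b * xb) * (A α * yb + xb ^ 2))
      + xb * ((A a + A b * xb)) ^ 2 * (1 + A α * xb)) * two
  have key : ∀ r : DeuringRing k α, δ (δ r) = (a * α + b) • δ r := by
    intro r
    obtain ⟨p, rfl⟩ := Ideal.Quotient.mk_surjective r
    induction p using MvPolynomial.induction_on with
    | C s =>
        have hs : (Ideal.Quotient.mk (Ideal.span {deuringRel k α}) (C s) :
            DeuringRing k α) = A s := rfl
        rw [hs, hAz, map_zero, smul_zero]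
    | add p q hp hq =>
        rw [map_add, map_add, map_add, smul_add, hp, hq]
    | mul_X p i hp =>
        have hq : δ (δ (Ideal.Quotient.mk (Ideal.span {deuringRel k α}) (X i))) =
            (a * α + b) • δ (Ideal.Quotient.mk (Ideal.span {deuringRel k α}) (X i)) := by
          fin_cases i
          · exact hX
          · exact hY
        set P := Ideal.Quotient.mk (Ideal.span {deuringRel k α}) p with hP
        set Q := Ideal.Quotient.mk (Ideal.span {deuringRel k α}) (X i) with hQ
        rw [hsmul] at hp hq
        rw [map_mul, Derivation.leibniz, smul_eq_mul, smul_eq_mul, hsmul,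
          map_add, Derivation.leibniz, Derivation.leibniz, smul_eq_mul, smul_eq_mul,
          smul_eq_mul, smul_eq_mul, hp, hq]
        linear_combination (δ P * δ Q) * two
  refine ⟨key, fun h0 r => ?_, fun h1 r => ?_⟩
  · rw [key r, h0, zero_smul]
  · rw [key r, h1, one_smul]
end

section
/- Let p be a prime, let R be a commutative ring of characteristic p, and let δ : R → R be a derivation. Then the p-fold composite δ^{∘p} = δ ∘ δ ∘ ⋯ ∘ δ (p times) again satisfies the Leibniz rule: δ^{∘p}(rs) = r·δ^{∘p}(s) + s·δ^{∘p}(r) for all r, s ∈ R; hence δ^{∘p} is again a derivation of R. -/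
open Finset in
lemma derivation_iterate_leibniz_formula {R : Type*} [CommRing R]
    (δ : Derivation ℤ R R) (r s : R) :
    ∀ n : ℕ, (⇑δ)^[n] (r * s) =
      ∑ k ∈ Finset.range (n + 1),
        n.choose k • ((⇑δ)^[k] r * (⇑δ)^[n - k] s) := by
  intro n
  induction n with
  | zero => simp
  | succ n ih =>
    rw [Function.iterate_succ_apply', ih, map_sum]
    have step : ∀ k ∈ Finset.range (n + 1),
        δ (n.choose k • ((⇑δ)^[k] r * (⇑δ)^[n - k] s)) =
          n.choose k • ((⇑δ)^[k + 1] r * (⇑δ)^[n - k] s) +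
          n.choose k • ((⇑δ)^[k] r * (⇑δ)^[n - k + 1] s) := by
      intro k hk
      have e1 : δ ((⇑δ)^[n - k] s) = (⇑δ)^[n - k + 1] s :=
        (Function.iterate_succ_apply' δ _ s).symm
      have e2 : δ ((⇑δ)^[k] r) = (⇑δ)^[k + 1] r :=
        (Function.iterate_succ_apply' δ _ r).symm
      rw [map_nsmul, Derivation.leibniz, smul_eq_mul, smul_eq_mul, e1, e2, smul_add,
        mul_comm ((⇑δ)^[n - k] s), add_comm]
    rw [Finset.sum_congr rfl step, Finset.sum_add_distrib]
    -- rewrite second sum with n + 1 - k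
    have h1 : ∑ k ∈ Finset.range (n + 1), n.choose k • ((⇑δ)^[k] r * (⇑δ)^[n - k + 1] s)
        = ∑ k ∈ Finset.range (n + 1), n.choose k • ((⇑δ)^[k] r * (⇑δ)^[n + 1 - k] s) := by
      refine Finset.sum_congr rfl fun k hk => ?_
      have : k ≤ n := by simpa [Nat.lt_succ_iff] using hk
      rw [Nat.succ_sub this]
    rw [h1]
    -- now expand the RHS
    rw [Finset.sum_range_succ' (fun k => (n+1).choose k • ((⇑δ)^[k] r * (⇑δ)^[n + 1 - k] s))]
    simp only [Nat.choose_succ_succ', add_smul, Nat.choose_zero_right, one_smul,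
      Nat.sub_zero, Function.iterate_zero_apply]
    rw [Finset.sum_add_distrib]
    have h2 : ∑ k ∈ Finset.range (n + 1),
        n.choose (k + 1) • ((⇑δ)^[k + 1] r * (⇑δ)^[n + 1 - (k + 1)] s) + r * (⇑δ)^[n + 1] s
        = ∑ k ∈ Finset.range (n + 1), n.choose k • ((⇑δ)^[k] r * (⇑δ)^[n + 1 - k] s) := by
      rw [Finset.sum_range_succ, Nat.choose_succ_self, zero_smul, add_zero,
        Finset.sum_range_succ' (fun k => n.choose k • ((⇑δ)^[k] r * (⇑δ)^[n + 1 - k] s))]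
      simp
    have h3 : ∑ k ∈ Finset.range (n + 1),
        n.choose k • ((⇑δ)^[k + 1] r * (⇑δ)^[n + 1 - (k + 1)] s)
        = ∑ k ∈ Finset.range (n + 1), n.choose k • ((⇑δ)^[k + 1] r * (⇑δ)^[n - k] s) := by
      refine Finset.sum_congr rfl fun k hk => ?_
      simp [Nat.succ_sub_succ]
    rw [h3, add_assoc, h2]

/-- If `R` is a commutative ring of prime characteristic `p` and `δ` is a derivation of `R`,
then the `p`-fold composite `δ^[p]` again satisfies the Leibniz rule
`δ^[p](rs) = r·δ^[p](s) + s·δ^[p](r)`; hence `δ^[p]` is again a derivation of `R`. -/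
theorem derivation_iterate_p_leibniz (p : ℕ) (hp : p.Prime) (R : Type*) [CommRing R]
    [CharP R p] (δ : Derivation ℤ R R) (r s : R) :
    (⇑δ)^[p] (r * s) = r * (⇑δ)^[p] s + s * (⇑δ)^[p] r := by
  rw [derivation_iterate_leibniz_formula δ r s p, Finset.sum_range_succ]
  have hmid : ∑ k ∈ Finset.range p, p.choose k • ((⇑δ)^[k] r * (⇑δ)^[p - k] s)
      = r * (⇑δ)^[p] s := by
    rw [Finset.sum_eq_single_of_mem 0 (Finset.mem_range.mpr hp.pos)]
    · simp
    · intro k hk hk0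
      have hkp : k < p := Finset.mem_range.mp hk
      have : (p.choose k : R) = 0 :=
        (CharP.cast_eq_zero_iff R p _).mpr (hp.dvd_choose_self hk0 hkp)
      rw [nsmul_eq_mul, this, zero_mul]
  rw [hmid]
  simp [mul_comm]
end
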